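/- If X and Y are independent random variables with mean 0 and variance 1, and Z is standard normal, then W₂((X+Y)/√2, Z)² ≤ (W₂(X,Z)² + W₂(Y,Z)²)/2. -/

import Mathlib

/-!
Couple `X` with `Z₁ ~ N(0,1)` and `Y` with `Z₂ ~ N(0,1)` almost optimally, and take the two
couplings independent. Then `((X + Y)/√2, (Z₁ + Z₂)/√2)` is a coupling of the law of
`(X + Y)/√2` (by independence of `X` and `Y`) with `N(0,1)` (by stability of the Gaussian), and
its cost is the average of the two costs: the cross term `E[(X - Z₁)(Y - Z₂)]` factors as
`E[X - Z₁] E[Y - Z₂]`, which vanishes because `E X = E Z₁ = 0`.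
-/

open MeasureTheory ProbabilityTheory Filter Set

/-- Quantile function (generalized inverse CDF) of a measure on ℝ. -/
noncomputable def qtl (μ : Measure ℝ) (t : ℝ) : ℝ :=
  sInf {x : ℝ | t ≤ (μ (Set.Iic x)).toReal}

/-- Lebesgue measure on (0,1). -/
noncomputable def unif01 : Measure ℝ := volume.restrict (Set.Ioo 0 1)

/-- Squared 2-Wasserstein distance: infimum of E[(X'-Y')²] over couplings. -/
noncomputable def W2sq (μ ν : Measure ℝ) : ℝ :=
  sInf { r : ℝ | ∃ π : Measure (ℝ × ℝ), IsProbabilityMeasure π ∧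
    π.map Prod.fst = μ ∧ π.map Prod.snd = ν ∧ r = ∫ p, (p.1 - p.2) ^ 2 ∂π }

/-- 2-Wasserstein distance. -/
noncomputable def W2 (μ ν : Measure ℝ) : ℝ := Real.sqrt (W2sq μ ν)

/-- Convergence in distribution: CDFs converge at continuity points of the limit CDF. -/
def ConvDist (μs : ℕ → Measure ℝ) (μ : Measure ℝ) : Prop :=
  ∀ x : ℝ, ContinuousAt (fun y => (μ (Set.Iic y)).toReal) x →
    Filter.Tendsto (fun n => (μs n (Set.Iic x)).toReal) Filter.atTop
      (nhds ((μ (Set.Iic x)).toReal))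

open Real

lemma le_mul_sInf_add_mul_sInf {S T : Set ℝ} {x a b : ℝ} (ha : 0 ≤ a) (hb : 0 ≤ b)
    (hS : S.Nonempty) (hT : T.Nonempty) (h : ∀ s ∈ S, ∀ t ∈ T, x ≤ a * s + b * t) :
    x ≤ a * sInf S + b * sInf T := by
  refine le_of_forall_pos_lt_add fun ε hε => ?_
  have hδ : 0 < ε / (a + b + 1) := by positivity
  obtain ⟨s, hs, hs_lt⟩ := Real.lt_sInf_add_pos hS hδ
  obtain ⟨t, ht, ht_lt⟩ := Real.lt_sInf_add_pos hT hδ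
  have hεδ : (a + b) * (ε / (a + b + 1)) < ε := by
    rw [mul_div_assoc', div_lt_iff₀ (by positivity)]
    nlinarith
  calc x ≤ a * s + b * t := h s hs t ht
    _ ≤ a * (sInf S + ε / (a + b + 1)) + b * (sInf T + ε / (a + b + 1)) := by
      gcongr
    _ < a * sInf S + b * sInf T + ε := by linarith

lemma integral_sq_mul_add_mul_prod {α β : Type*} [MeasurableSpace α] [MeasurableSpace β]
    {μ : Measure α} {ν : Measure β} [IsProbabilityMeasure μ] [IsProbabilityMeasure ν]
    {f : α → ℝ} {g : β → ℝ} (hf : MemLp f 2 μ) (hg : MemLp g 2 ν) (hf0 : ∫ x, f x ∂μ = 0)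
    (a b : ℝ) :
    ∫ z, (a * f z.1 + b * g z.2) ^ 2 ∂(μ.prod ν)
      = a ^ 2 * ∫ x, f x ^ 2 ∂μ + b ^ 2 * ∫ y, g y ^ 2 ∂ν := by
  -- The factors `1` put every term in the form `F z.1 * G z.2` required by `integral_prod_mul`.
  have hexp : ∀ z : α × β, (a * f z.1 + b * g z.2) ^ 2
      = a ^ 2 * f z.1 ^ 2 * 1 + 2 * a * b * f z.1 * g z.2 + b ^ 2 * (1 * g z.2 ^ 2) :=
    fun z => by ring
  have i1 : Integrable (fun z : α × β => a ^ 2 * f z.1 ^ 2 * 1) (μ.prod ν) :=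
    (hf.integrable_sq.const_mul _).mul_prod (integrable_const 1)
  have i2 : Integrable (fun z : α × β => 2 * a * b * f z.1 * g z.2) (μ.prod ν) :=
    ((hf.integrable one_le_two).const_mul _).mul_prod (hg.integrable one_le_two)
  have i3 : Integrable (fun z : α × β => b ^ 2 * (1 * g z.2 ^ 2)) (μ.prod ν) :=
    ((integrable_const 1).mul_prod hg.integrable_sq).const_mul _
  have i12 : Integrable
      (fun z : α × β => a ^ 2 * f z.1 ^ 2 * 1 + 2 * a * b * f z.1 * g z.2) (μ.prod ν) :=
    i1.add i2
  simp_rw [hexp]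
  rw [integral_add i12 i3, integral_add i1 i2, integral_const_mul,
    integral_prod_mul (fun x => a ^ 2 * f x ^ 2) (fun _ => (1 : ℝ)),
    integral_prod_mul (fun x => 2 * a * b * f x) g,
    integral_prod_mul (fun _ => (1 : ℝ)) (fun y => g y ^ 2),
    integral_const_mul, integral_const_mul, hf0]
  simp

lemma map_map_smul_add_smul_prod {ρ₁ ρ₂ : Measure (ℝ × ℝ)} [SFinite ρ₁] [SFinite ρ₂]
    {φ : ℝ × ℝ → ℝ} (hφ : Measurable φ) (a b : ℝ)
    (hφ_lin : ∀ u v, φ (a • u + b • v) = a * φ u + b * φ v) :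
    ((ρ₁.prod ρ₂).map (fun q => a • q.1 + b • q.2)).map φ
      = ((ρ₁.map φ).prod (ρ₂.map φ)).map (fun p => a * p.1 + b * p.2) := by
  rw [Measure.map_prod_map _ _ hφ hφ, Measure.map_map (by fun_prop) (by fun_prop),
    Measure.map_map (by fun_prop) (hφ.prodMap hφ)]
  congr 1
  funext q
  exact hφ_lin q.1 q.2

lemma gaussianReal_prod_map_mul_add_mul {m₁ m₂ : ℝ} {v₁ v₂ : NNReal} (a b : ℝ) :
    ((gaussianReal m₁ v₁).prod (gaussianReal m₂ v₂)).map (fun p => a * p.1 + b * p.2)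
      = gaussianReal (a * m₁ + b * m₂)
          (NNReal.mk (a ^ 2) (sq_nonneg a) * v₁ + NNReal.mk (b ^ 2) (sq_nonneg b) * v₂) := by
  have hcomp : (fun p : ℝ × ℝ => a * p.1 + b * p.2)
      = (fun p : ℝ × ℝ => p.1 + p.2) ∘ Prod.map (a * ·) (b * ·) := rfl
  rw [hcomp, ← Measure.map_map (by fun_prop) (by fun_prop),
    ← Measure.map_prod_map _ _ (by fun_prop) (by fun_prop),
    gaussianReal_map_const_mul, gaussianReal_map_const_mul, ← Measure.conv,
    gaussianReal_conv_gaussianReal]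

def couplingCosts (μ ν : Measure ℝ) : Set ℝ :=
  { r : ℝ | ∃ ρ : Measure (ℝ × ℝ), IsProbabilityMeasure ρ ∧
    ρ.map Prod.fst = μ ∧ ρ.map Prod.snd = ν ∧ r = ∫ p, (p.1 - p.2) ^ 2 ∂ρ }

lemma W2sq_eq_sInf_couplingCosts (μ ν : Measure ℝ) : W2sq μ ν = sInf (couplingCosts μ ν) := rfl

lemma couplingCosts_nonempty (μ ν : Measure ℝ) [IsProbabilityMeasure μ]
    [IsProbabilityMeasure ν] : (couplingCosts μ ν).Nonempty :=
  ⟨_, μ.prod ν, inferInstance, by simp, by simp, rfl⟩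

lemma couplingCosts_nonneg {μ ν : Measure ℝ} : ∀ r ∈ couplingCosts μ ν, 0 ≤ r := by
  rintro _ ⟨ρ, -, -, -, rfl⟩
  exact integral_nonneg fun p => sq_nonneg _

lemma W2sq_nonneg (μ ν : Measure ℝ) : 0 ≤ W2sq μ ν :=
  Real.sInf_nonneg couplingCosts_nonneg

lemma W2_sq (μ ν : Measure ℝ) : W2 μ ν ^ 2 = W2sq μ ν :=
  Real.sq_sqrt (W2sq_nonneg μ ν)

lemma W2sq_le_integral {μ ν : Measure ℝ} (ρ : Measure (ℝ × ℝ)) [IsProbabilityMeasure ρ]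
    (h_fst : ρ.map Prod.fst = μ) (h_snd : ρ.map Prod.snd = ν) :
    W2sq μ ν ≤ ∫ p, (p.1 - p.2) ^ 2 ∂ρ :=
  csInf_le ⟨0, couplingCosts_nonneg⟩ ⟨ρ, inferInstance, h_fst, h_snd, rfl⟩

lemma memLp_fst_sub_snd {ρ : Measure (ℝ × ℝ)} {μ ν : Measure ℝ}
    (h_fst : ρ.map Prod.fst = μ) (h_snd : ρ.map Prod.snd = ν)
    (hμ : MemLp id 2 μ) (hν : MemLp id 2 ν) : MemLp (fun p : ℝ × ℝ => p.1 - p.2) 2 ρ := by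
  subst h_fst h_snd
  exact ((memLp_map_measure_iff aestronglyMeasurable_id measurable_fst.aemeasurable).1 hμ).sub
    ((memLp_map_measure_iff aestronglyMeasurable_id measurable_snd.aemeasurable).1 hν)

lemma integral_fst_sub_snd {ρ : Measure (ℝ × ℝ)} {μ ν : Measure ℝ}
    (h_fst : ρ.map Prod.fst = μ) (h_snd : ρ.map Prod.snd = ν)
    (hμ : Integrable id μ) (hν : Integrable id ν) :
    ∫ p, (p.1 - p.2) ∂ρ = ∫ x, x ∂μ - ∫ x, x ∂ν := by
  subst h_fst h_snd
  have h1 : Integrable (fun p : ℝ × ℝ => p.1) ρ :=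
    (integrable_map_measure aestronglyMeasurable_id measurable_fst.aemeasurable).1 hμ
  have h2 : Integrable (fun p : ℝ × ℝ => p.2) ρ :=
    (integrable_map_measure aestronglyMeasurable_id measurable_snd.aemeasurable).1 hν
  rw [integral_sub h1 h2,
    integral_map (f := fun x => x) measurable_fst.aemeasurable aestronglyMeasurable_id,
    integral_map (f := fun x => x) measurable_snd.aemeasurable aestronglyMeasurable_id]

theorem W2sq_map_mul_add_mul_prod_le {μ₁ μ₂ ν₁ ν₂ : Measure ℝ} [IsProbabilityMeasure μ₁]
    [IsProbabilityMeasure μ₂] [IsProbabilityMeasure ν₁] [IsProbabilityMeasure ν₂]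
    (hμ₁ : MemLp id 2 μ₁) (hμ₂ : MemLp id 2 μ₂) (hν₁ : MemLp id 2 ν₁) (hν₂ : MemLp id 2 ν₂)
    (hmean : ∫ x, x ∂μ₁ = ∫ x, x ∂ν₁) (a b : ℝ) :
    W2sq ((μ₁.prod μ₂).map (fun p => a * p.1 + b * p.2))
        ((ν₁.prod ν₂).map (fun p => a * p.1 + b * p.2))
      ≤ a ^ 2 * W2sq μ₁ ν₁ + b ^ 2 * W2sq μ₂ ν₂ := by
  rw [W2sq_eq_sInf_couplingCosts μ₁, W2sq_eq_sInf_couplingCosts μ₂]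
  refine le_mul_sInf_add_mul_sInf (sq_nonneg a) (sq_nonneg b) (couplingCosts_nonempty _ _)
    (couplingCosts_nonempty _ _) ?_
  rintro _ ⟨ρ₁, _, hρ₁_fst, hρ₁_snd, rfl⟩ _ ⟨ρ₂, _, hρ₂_fst, hρ₂_snd, rfl⟩
  set T : (ℝ × ℝ) × (ℝ × ℝ) → ℝ × ℝ := fun q => a • q.1 + b • q.2
  have hT : Measurable T := by fun_prop
  have : IsProbabilityMeasure ((ρ₁.prod ρ₂).map T) :=
    Measure.isProbabilityMeasure_map hT.aemeasurable
  refine (W2sq_le_integral ((ρ₁.prod ρ₂).map T) ?_ ?_).trans_eq ?_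
  · rw [map_map_smul_add_smul_prod measurable_fst a b fun _ _ => rfl, hρ₁_fst, hρ₂_fst]
  · rw [map_map_smul_add_smul_prod measurable_snd a b fun _ _ => rfl, hρ₁_snd, hρ₂_snd]
  have hmean₁ : ∫ p, (p.1 - p.2) ∂ρ₁ = 0 := by
    rw [integral_fst_sub_snd hρ₁_fst hρ₁_snd (hμ₁.integrable one_le_two)
      (hν₁.integrable one_le_two), hmean, sub_self]
  rw [integral_map hT.aemeasurable (by fun_prop),
    ← integral_sq_mul_add_mul_prod (memLp_fst_sub_snd hρ₁_fst hρ₁_snd hμ₁ hν₁)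
      (memLp_fst_sub_snd hρ₂_fst hρ₂_snd hμ₂ hν₂) hmean₁]
  congr 1
  funext q
  simp only [T, Prod.fst_add, Prod.snd_add, Prod.smul_fst, Prod.smul_snd, smul_eq_mul]
  ring

theorem stmt7_general {Ω : Type*} [MeasurableSpace Ω] (P : Measure Ω) [IsProbabilityMeasure P]
    (X Y : Ω → ℝ) (hX : Measurable X) (hY : Measurable Y)
    (hX2 : MemLp X 2 P) (hY2 : MemLp Y 2 P)
    (hXm : ∫ ω, X ω ∂P = 0)
    (hind : IndepFun X Y P) :
    W2 (P.map (fun ω => (X ω + Y ω) / Real.sqrt 2)) (gaussianReal 0 1) ^ 2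
      ≤ (W2 (P.map X) (gaussianReal 0 1) ^ 2 + W2 (P.map Y) (gaussianReal 0 1) ^ 2) / 2 := by
  set c : ℝ := (√2)⁻¹
  have hc : c ^ 2 = 1 / 2 := by rw [inv_pow, sq_sqrt zero_le_two, one_div]
  have h_law : P.map (fun ω => (X ω + Y ω) / √2)
      = ((P.map X).prod (P.map Y)).map fun p => c * p.1 + c * p.2 := by
    rw [← hind.map_prod_eq_prod_map_map hX.aemeasurable hY.aemeasurable,
      Measure.map_map (by fun_prop) (by fun_prop)]
    congr 1
    funext ω
    simp only [Function.comp_apply, c]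
    ring
  have h_gauss : ((gaussianReal 0 1).prod (gaussianReal 0 1)).map (fun p => c * p.1 + c * p.2)
      = gaussianReal 0 1 := by
    rw [gaussianReal_prod_map_mul_add_mul]
    congr 1
    · simp
    · ext
      simp only [mul_one, NNReal.coe_add, NNReal.coe_mk, hc, NNReal.coe_one]
      norm_num
  have : IsProbabilityMeasure (P.map X) := Measure.isProbabilityMeasure_map hX.aemeasurable
  have : IsProbabilityMeasure (P.map Y) := Measure.isProbabilityMeasure_map hY.aemeasurable
  have hXm' : ∫ x, x ∂(P.map X) = ∫ x, x ∂(gaussianReal 0 1) := by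
    rw [integral_map (f := fun x => x) hX.aemeasurable aestronglyMeasurable_id, hXm,
      integral_id_gaussianReal]
  rw [W2_sq, W2_sq, W2_sq, h_law]
  conv_lhs => rw [← h_gauss]
  calc _ ≤ c ^ 2 * W2sq (P.map X) (gaussianReal 0 1)
          + c ^ 2 * W2sq (P.map Y) (gaussianReal 0 1) :=
        W2sq_map_mul_add_mul_prod_le
          ((memLp_map_measure_iff aestronglyMeasurable_id hX.aemeasurable).2 hX2)
          ((memLp_map_measure_iff aestronglyMeasurable_id hY.aemeasurable).2 hY2)
          (memLp_id_gaussianReal 2) (memLp_id_gaussianReal 2) hXm' c c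
    _ = _ := by rw [hc]; ring

theorem stmt7 {Ω : Type*} [MeasurableSpace Ω] (P : Measure Ω) [IsProbabilityMeasure P]
    (X Y : Ω → ℝ) (hX : Measurable X) (hY : Measurable Y)
    (hX2 : MemLp X 2 P) (hY2 : MemLp Y 2 P)
    (hXm : ∫ ω, X ω ∂P = 0) (hYm : ∫ ω, Y ω ∂P = 0)
    (hXv : ∫ ω, (X ω) ^ 2 ∂P = 1) (hYv : ∫ ω, (Y ω) ^ 2 ∂P = 1)
    (hind : IndepFun X Y P) :
    W2 (P.map (fun ω => (X ω + Y ω) / Real.sqrt 2)) (gaussianReal 0 1) ^ 2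
      ≤ (W2 (P.map X) (gaussianReal 0 1) ^ 2 + W2 (P.map Y) (gaussianReal 0 1) ^ 2) / 2 :=
  stmt7_general P X Y hX hY hX2 hY2 hXm hind
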